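/- arXiv:2102.04457 — 3 statements merged into one kernel-verified Lean document; each statement's English description precedes it below -/
import Mathlib

section
/- Let P, Q, ν be probability measures on measurable spaces 𝒴, 𝒴, 𝒰 respectively, let G : 𝒰 → Set 𝒴 and J : 𝒴 → Set 𝒴 be correspondences, and let β ∈ [0,1). If for every measurable set A ⊆ 𝒴 we have Q(A) ≤ P({y : J(y) ∩ A ≠ ∅}) + β, and for every measurable set B ⊆ 𝒴 we have P(B) ≤ ν({u : G(u) ∩ B ≠ ∅}), then for every measurable set A ⊆ 𝒴 we have Q(A) ≤ ν({u : (J ∘ G)(u) ∩ A ≠ ∅}) + β, where (J ∘ G)(u) = ⋃_{y ∈ G(u)} J(y). -/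
open MeasureTheory Set

theorem setOf_biUnion_inter_nonempty {α β γ : Type*} (G : α → Set β) (J : β → Set γ)
    (A : Set γ) :
    {u | ((⋃ y ∈ G u, J y) ∩ A).Nonempty} = {u | (G u ∩ {y | (J y ∩ A).Nonempty}).Nonempty} := by
  ext u
  constructor
  · rintro ⟨z, hz, hzA⟩
    obtain ⟨y, hyG, hzJ⟩ := mem_iUnion₂.mp hz
    exact ⟨y, hyG, z, hzJ, hzA⟩
  · rintro ⟨y, hyG, z, hzJ, hzA⟩
    exact ⟨z, mem_iUnion₂.mpr ⟨y, hyG, hzJ⟩, hzA⟩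

theorem composition_dual_general
    {𝒴 𝒰 : Type*} [MeasurableSpace 𝒴] [MeasurableSpace 𝒰]
    (P Q : Measure 𝒴) (ν : Measure 𝒰)
    (G : 𝒰 → Set 𝒴) (J : 𝒴 → Set 𝒴) (β : ENNReal)
    (hJmeas : ∀ A : Set 𝒴, MeasurableSet A → MeasurableSet {y | (J y ∩ A).Nonempty})
    (h1 : ∀ A : Set 𝒴, MeasurableSet A → Q A ≤ P {y | (J y ∩ A).Nonempty} + β)
    (h2 : ∀ B : Set 𝒴, MeasurableSet B → P B ≤ ν {u | (G u ∩ B).Nonempty}) :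
    ∀ A : Set 𝒴, MeasurableSet A →
      Q A ≤ ν {u | ((⋃ y ∈ G u, J y) ∩ A).Nonempty} + β := by
  intro A hA
  calc Q A ≤ P {y | (J y ∩ A).Nonempty} + β := h1 A hA
    _ ≤ ν {u | (G u ∩ {y | (J y ∩ A).Nonempty}).Nonempty} + β := by
      gcongr
      exact h2 _ (hJmeas A hA)
    _ = ν {u | ((⋃ y ∈ G u, J y) ∩ A).Nonempty} + β := by
      rw [setOf_biUnion_inter_nonempty]

/-- Measure-theoretic core of the Composition Theorem (Galichon–Henry). -/
theorem composition_dual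
    {𝒴 𝒰 : Type*} [MeasurableSpace 𝒴] [MeasurableSpace 𝒰]
    (P Q : Measure 𝒴) (ν : Measure 𝒰)
    [IsProbabilityMeasure P] [IsProbabilityMeasure Q] [IsProbabilityMeasure ν]
    (G : 𝒰 → Set 𝒴) (J : 𝒴 → Set 𝒴) (β : ENNReal) (hβ : β < 1)
    (hJmeas : ∀ A : Set 𝒴, MeasurableSet A → MeasurableSet {y | (J y ∩ A).Nonempty})
    (h1 : ∀ A : Set 𝒴, MeasurableSet A → Q A ≤ P {y | (J y ∩ A).Nonempty} + β)
    (h2 : ∀ B : Set 𝒴, MeasurableSet B → P B ≤ ν {u | (G u ∩ B).Nonempty}) :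
    ∀ A : Set 𝒴, MeasurableSet A →
      Q A ≤ ν {u | ((⋃ y ∈ G u, J y) ∩ A).Nonempty} + β :=
  composition_dual_general P Q ν G J β hJmeas h1 h2
end

section
/- Let Y be a random variable with ℙ(Y ≤ y) = exp(−1/y) for y > 0, let θ > 0, and suppose U is an exponential random variable with rate θ such that Y ∈ [λ̲/U, λ̄/U] almost surely, where 0 < λ̲ ≤ λ̄. Then 1/λ̄ ≤ θ ≤ 1/λ̲. -/
open MeasureTheory Real

/-- CARA portfolio example, necessity: the a.s. inclusion Y ∈ [λ̲/U, λ̄/U] with U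
exponential of rate θ forces 1/λ̄ ≤ θ ≤ 1/λ̲. -/
theorem cara_necessity
    {Ω : Type*} [MeasurableSpace Ω] (ℙ : Measure Ω) [IsProbabilityMeasure ℙ]
    (Y : Ω → ℝ) (hYmeas : Measurable Y)
    (hYcdf_pos : ∀ y : ℝ, 0 < y → ℙ {ω | Y ω ≤ y} = ENNReal.ofReal (exp (-1 / y)))
    (hYcdf_nonpos : ∀ y : ℝ, y ≤ 0 → ℙ {ω | Y ω ≤ y} = 0)
    (θ : ℝ) (hθ : 0 < θ) (lamL lamU : ℝ) (hL : 0 < lamL) (hLU : lamL ≤ lamU)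
    (U : Ω → ℝ) (hUmeas : Measurable U)
    (hUcdf_pos : ∀ u : ℝ, 0 ≤ u → ℙ {ω | U ω ≤ u} = ENNReal.ofReal (1 - exp (-θ * u)))
    (hUcdf_neg : ∀ u : ℝ, u < 0 → ℙ {ω | U ω ≤ u} = 0)
    (hincl : ∀ᵐ ω ∂ℙ, Y ω ∈ Set.Icc (lamL / U ω) (lamU / U ω)) :
    1 / lamU ≤ θ ∧ θ ≤ 1 / lamL := by
  have hU0 : 0 < lamU := lt_of_lt_of_le hL hLU
  -- Y > 0 a.s.
  have hYpos : ∀ᵐ ω ∂ℙ, 0 < Y ω := by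
    rw [ae_iff]
    have := hYcdf_nonpos 0 le_rfl
    simpa [not_lt] using this
  -- U > 0 a.s.
  have hUpos : ∀ᵐ ω ∂ℙ, 0 < U ω := by
    rw [ae_iff]
    have := hUcdf_pos 0 le_rfl
    simpa [not_lt] using this
  -- key a.s. bounds
  have key : ∀ᵐ ω ∂ℙ, 0 < Y ω ∧ 0 < U ω ∧ lamL ≤ Y ω * U ω ∧ Y ω * U ω ≤ lamU := by
    filter_upwards [hincl, hYpos, hUpos] with ω h hy hu
    exact ⟨hy, hu, (div_le_iff₀ hu).mp h.1, (le_div_iff₀ hu).mp h.2⟩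
  have hmeasU : ∀ v : ℝ, MeasurableSet {ω | U ω ≤ v} := fun v =>
    measurableSet_le hUmeas measurable_const
  have compl_eq : ∀ v : ℝ, 0 ≤ v →
      ℙ ({ω | U ω ≤ v}ᶜ) = ENNReal.ofReal (exp (-θ * v)) := by
    intro v hv
    rw [prob_compl_eq_one_sub (hmeasU v), hUcdf_pos v hv]
    have he : exp (-θ * v) ≤ 1 := exp_le_one_iff.mpr (by nlinarith)
    rw [← ENNReal.ofReal_one, ← ENNReal.ofReal_sub _ (by linarith)]
    ring_nf
  constructor
  · -- 1/lamU ≤ θ, from {U ≤ 1}ᶜ ⊆ₐₑ {Y ≤ lamU}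
    have hsub : ℙ ({ω | U ω ≤ 1}ᶜ) ≤ ℙ {ω | Y ω ≤ lamU} := by
      apply measure_mono_ae
      filter_upwards [key] with ω ⟨hy, hu, h1, h2⟩ hmem
      have h3 : ¬ U ω ≤ 1 := hmem
      rw [not_le] at h3
      show Y ω ≤ lamU
      nlinarith
    rw [compl_eq 1 zero_le_one, hYcdf_pos lamU hU0] at hsub
    have h1 := (ENNReal.ofReal_le_ofReal_iff (exp_nonneg _)).mp hsub
    have h2 := exp_le_exp.mp h1
    rw [neg_div] at h2
    linarith
  · -- θ ≤ 1/lamL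
    have hv : ∀ v : ℝ, 0 ≤ v → v < 1 → θ * v ≤ 1 / lamL := by
      intro v hv0 hv1
      have hsub : ℙ {ω | Y ω ≤ lamL} ≤ ℙ ({ω | U ω ≤ v}ᶜ) := by
        apply measure_mono_ae
        filter_upwards [key] with ω ⟨hy, hu, h1, h2⟩ hmem
        have h3 : Y ω ≤ lamL := hmem
        show ¬ U ω ≤ v
        rw [not_le]
        have hU1 : 1 ≤ U ω := by nlinarith
        linarith
      rw [compl_eq v hv0, hYcdf_pos lamL hL] at hsub
      have h1 := (ENNReal.ofReal_le_ofReal_iff (exp_nonneg _)).mp hsub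
      have h2 := exp_le_exp.mp h1
      rw [neg_div] at h2
      linarith
    by_contra hcon
    push_neg at hcon
    set c := 1 / lamL with hc
    have hc0 : 0 < c := by positivity
    have hvpos : 0 < c / θ := by positivity
    have hvlt : c / θ < 1 := (div_lt_one hθ).mpr hcon
    have h3 := hv ((c/θ + 1)/2) (by linarith) (by linarith)
    have : θ * ((c/θ + 1)/2) = (c + θ)/2 := by field_simp
    rw [this] at h3
    linarith
end

section
/- Let P₁ and P₂ be Borel probability measures on ℝ with quantile functions Q₁ and Q₂. For any coupling (X, Y) of P₁ and P₂ (random variables on a common probability space with X ~ P₁, Y ~ P₂), ess sup |X − Y| ≥ sup_{t ∈ (0,1)} |Q₁(t) − Q₂(t)|, and the comonotone coupling (Q₁(Z), Q₂(Z)) with Z uniform on (0,1) achieves this bound. -/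
/-!
If `|X - Y| ≤ M` almost surely, then `{Y ≤ y - M} ⊆ {X ≤ y}` up to a null set, so
`F₂ (y - M) ≤ F₁ y`; the Galois connection `Q t ≤ y ↔ t ≤ F y` (for `0 < t < 1`) turns this
into `Q₁ t ≤ Q₂ t + M`, and by symmetry `|Q₁ t - Q₂ t| ≤ M`. The same Galois connection shows
that `Q` pushes the uniform law on `(0, 1)` forward to `P`, so `(Q₁, Q₂)` is itself a coupling
of `P₁` and `P₂`, and the lower bound applied to it is the missing inequality.
-/

open MeasureTheory Set Filter Topology

namespace ProbabilityTheory

/-- For `t ≤ 0` the set is unbounded below and for `t > 1` it is empty, so `sInf` returns junk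
there: all statements below assume `t ∈ Ioo 0 1`. -/
noncomputable def quantile (μ : Measure ℝ) (t : ℝ) : ℝ := sInf {y | t ≤ cdf μ y}

variable {μ ν : Measure ℝ} {t y M : ℝ}

theorem quantile_eq_sInf_toReal [IsProbabilityMeasure μ] :
    quantile μ = fun t => sInf {y | t ≤ (μ (Iic y)).toReal} := by
  funext t
  simp only [quantile, cdf_eq_real, measureReal_def]

theorem le_cdf_of_forall_lt (h : ∀ z, y < z → t ≤ cdf μ z) : t ≤ cdf μ y :=
  ge_of_tendsto (((cdf μ).right_continuous y).mono Ioi_subset_Ici_self)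
    (eventually_nhdsWithin_of_forall h)

theorem quantile_le_iff (ht : t ∈ Ioo 0 1) : quantile μ t ≤ y ↔ t ≤ cdf μ y := by
  have hne : {y | t ≤ cdf μ y}.Nonempty :=
    ((tendsto_cdf_atTop μ).eventually (eventually_ge_nhds ht.2)).exists
  have hbdd : BddBelow {y | t ≤ cdf μ y} := by
    obtain ⟨z, hz⟩ := ((tendsto_cdf_atBot μ).eventually (eventually_lt_nhds ht.1)).exists
    exact ⟨z, fun w hw => le_of_not_gt fun hwz => (hw.trans (monotone_cdf μ hwz.le)).not_gt hz⟩
  refine ⟨fun h => le_cdf_of_forall_lt fun z hz => ?_, fun h => csInf_le hbdd h⟩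
  obtain ⟨w, hw, hwz⟩ := exists_lt_of_csInf_lt hne (h.trans_lt hz)
  exact hw.trans (monotone_cdf μ hwz.le)

theorem le_cdf_quantile (ht : t ∈ Ioo 0 1) : t ≤ cdf μ (quantile μ t) :=
  (quantile_le_iff ht).1 le_rfl

theorem monotoneOn_quantile : MonotoneOn (quantile μ) (Ioo 0 1) := fun _ hs _ ht hst =>
  (quantile_le_iff hs).2 (hst.trans (le_cdf_quantile ht))

theorem aemeasurable_quantile (μ : Measure ℝ) :
    AEMeasurable (quantile μ) (volume.restrict (Ioo 0 1)) :=
  aemeasurable_restrict_of_monotoneOn measurableSet_Ioo monotoneOn_quantile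

theorem quantile_le_add_of_cdf_sub_le (h : ∀ y, cdf ν (y - M) ≤ cdf μ y) (ht : t ∈ Ioo 0 1) :
    quantile μ t ≤ quantile ν t + M :=
  (quantile_le_iff ht).2 <| (le_cdf_quantile ht).trans <| by simpa using h (quantile ν t + M)

theorem cdf_map_sub_le_of_ae_sub_le {Ω : Type*} [MeasurableSpace Ω] {P : Measure Ω}
    [IsProbabilityMeasure P] {X Y : Ω → ℝ} (hX : AEMeasurable X P) (hY : AEMeasurable Y P)
    (h : ∀ᵐ ω ∂P, X ω - Y ω ≤ M) (y : ℝ) : cdf (P.map Y) (y - M) ≤ cdf (P.map X) y := by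
  have := Measure.isProbabilityMeasure_map hX
  have := Measure.isProbabilityMeasure_map hY
  simp only [cdf_eq_real, measureReal_def]
  rw [Measure.map_apply_of_aemeasurable hY measurableSet_Iic,
    Measure.map_apply_of_aemeasurable hX measurableSet_Iic]
  refine ENNReal.toReal_mono (measure_ne_top _ _) (measure_mono_ae ?_)
  filter_upwards [h] with ω hω (hYω : Y ω ≤ y - M)
  show X ω ≤ y
  linarith

theorem abs_quantile_map_sub_le {Ω : Type*} [MeasurableSpace Ω] {P : Measure Ω}
    [IsProbabilityMeasure P] {X Y : Ω → ℝ} (hX : AEMeasurable X P) (hY : AEMeasurable Y P)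
    (h : ∀ᵐ ω ∂P, |X ω - Y ω| ≤ M) (ht : t ∈ Ioo 0 1) :
    |quantile (P.map X) t - quantile (P.map Y) t| ≤ M := by
  have hXY := quantile_le_add_of_cdf_sub_le
    (cdf_map_sub_le_of_ae_sub_le hX hY (h.mono fun _ h => (abs_le.1 h).2)) ht
  have hYX := quantile_le_add_of_cdf_sub_le
    (cdf_map_sub_le_of_ae_sub_le hY hX (h.mono fun _ h => by linarith [(abs_le.1 h).1])) ht
  exact abs_le.2 ⟨by linarith, by linarith⟩

theorem ofReal_abs_quantile_map_sub_le_essSup {Ω : Type*} [MeasurableSpace Ω]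
    {P : Measure Ω} [IsProbabilityMeasure P] {X Y : Ω → ℝ} (hX : AEMeasurable X P)
    (hY : AEMeasurable Y P) (ht : t ∈ Ioo 0 1) :
    ENNReal.ofReal |quantile (P.map X) t - quantile (P.map Y) t|
      ≤ essSup (fun ω => ENNReal.ofReal |X ω - Y ω|) P := by
  set E := essSup (fun ω => ENNReal.ofReal |X ω - Y ω|) P
  rcases eq_or_ne E ⊤ with hE | hE
  · exact hE ▸ le_top
  have hbound : ∀ᵐ ω ∂P, |X ω - Y ω| ≤ E.toReal := by
    filter_upwards [ENNReal.ae_le_essSup fun ω => ENNReal.ofReal |X ω - Y ω|] with ω hω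
    exact (ENNReal.ofReal_le_iff_le_toReal hE).1 hω
  exact (ENNReal.ofReal_le_iff_le_toReal hE).2 (abs_quantile_map_sub_le hX hY hbound ht)

theorem volume_Ioo_inter_Iic {c : ℝ} (hc : c ≤ 1) :
    volume (Ioo 0 1 ∩ Iic c) = ENNReal.ofReal c := by
  refine le_antisymm ?_ ?_
  · calc volume (Ioo 0 1 ∩ Iic c) ≤ volume (Icc 0 c) :=
          measure_mono fun x hx => ⟨hx.1.1.le, hx.2⟩
      _ = ENNReal.ofReal c := by simp [Real.volume_Icc]
  · calc ENNReal.ofReal c = volume (Ioo 0 c) := by simp [Real.volume_Ioo]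
      _ ≤ volume (Ioo 0 1 ∩ Iic c) :=
          measure_mono fun x hx => ⟨⟨hx.1, hx.2.trans_le hc⟩, hx.2.le⟩

instance isProbabilityMeasure_restrict_Ioo_zero_one :
    IsProbabilityMeasure (volume.restrict (Ioo (0 : ℝ) 1)) :=
  ⟨by simp [Real.volume_Ioo]⟩

theorem map_quantile_restrict_Ioo [IsProbabilityMeasure μ] :
    (volume.restrict (Ioo 0 1)).map (quantile μ) = μ := by
  refine Measure.ext_of_Iic _ _ fun y => ?_
  have hpre : Ioo 0 1 ∩ quantile μ ⁻¹' Iic y = Ioo 0 1 ∩ Iic (cdf μ y) := by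
    ext s
    simp only [mem_inter_iff, mem_preimage, mem_Iic, and_congr_right_iff]
    exact fun hs => quantile_le_iff hs
  rw [Measure.map_apply_of_aemeasurable (aemeasurable_quantile μ) measurableSet_Iic,
    Measure.restrict_apply' measurableSet_Ioo, inter_comm, hpre,
    volume_Ioo_inter_Iic (cdf_le_one μ y), ofReal_cdf]

end ProbabilityTheory

open ProbabilityTheory

/-- Optimality of the comonotone (quantile) coupling for the minimax (L∞) transport cost
on ℝ: any coupling's essential sup distance dominates the sup-norm distance between the
quantile functions, and the quantile coupling achieves it. -/
theorem quantile_coupling_minimax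
    (P₁ P₂ : Measure ℝ) [IsProbabilityMeasure P₁] [IsProbabilityMeasure P₂]
    (F₁ F₂ : ℝ → ℝ) (hF₁ : F₁ = fun y => (P₁ (Iic y)).toReal)
    (hF₂ : F₂ = fun y => (P₂ (Iic y)).toReal)
    (Q₁ Q₂ : ℝ → ℝ) (hQ₁ : Q₁ = fun t => sInf {y : ℝ | t ≤ F₁ y})
    (hQ₂ : Q₂ = fun t => sInf {y : ℝ | t ≤ F₂ y})
    (S : ENNReal) (hS : S = ⨆ t ∈ Ioo (0 : ℝ) 1, ENNReal.ofReal |Q₁ t - Q₂ t|) :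
    (∀ (Ω : Type) (_ : MeasurableSpace Ω) (μ : Measure Ω), IsProbabilityMeasure μ →
      ∀ X Y : Ω → ℝ, Measurable X → Measurable Y →
        μ.map X = P₁ → μ.map Y = P₂ →
        S ≤ essSup (fun ω => ENNReal.ofReal |X ω - Y ω|) μ) ∧
      essSup (fun t => ENNReal.ofReal |Q₁ t - Q₂ t|) (volume.restrict (Ioo (0 : ℝ) 1)) = S := by
  obtain rfl : Q₁ = quantile P₁ := by rw [hQ₁, hF₁, quantile_eq_sInf_toReal]
  obtain rfl : Q₂ = quantile P₂ := by rw [hQ₂, hF₂, quantile_eq_sInf_toReal]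
  subst hS
  refine ⟨fun Ω _ μ _ X Y hX hY hXP hYP => iSup₂_le fun t ht => ?_, le_antisymm ?_ ?_⟩
  · subst hXP hYP
    exact ofReal_abs_quantile_map_sub_le_essSup hX.aemeasurable hY.aemeasurable ht
  · refine essSup_le_of_ae_le _ ?_
    filter_upwards [ae_restrict_mem measurableSet_Ioo] with t ht
    exact le_biSup (fun t => ENNReal.ofReal |quantile P₁ t - quantile P₂ t|) ht
  · refine iSup₂_le fun t ht => ?_
    have := ofReal_abs_quantile_map_sub_le_essSup (aemeasurable_quantile P₁)
      (aemeasurable_quantile P₂) ht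
    rwa [map_quantile_restrict_Ioo, map_quantile_restrict_Ioo] at this
end
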